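/- Let n be a positive even integer and let z ∈ I^FPF_n be Sp-dominant, i.e. D^Sp(z) = {(i+j, j) : j ∈ [k], 1 ≤ i ≤ μ_j} for some strict partition μ_1 > μ_2 > ⋯ > μ_k > 0. Then 𝔊^Sp_z = ∏_{(i,j) ∈ D^Sp(z)} (x_i + x_j + β x_i x_j). -/

import Mathlib

open MvPolynomial

noncomputable section

/-- The coefficient ring `ℤ[β]`. -/
abbrev Rb : Type := Polynomial ℤ

/-- The indeterminate `β`. -/
def bb : Rb := Polynomial.X

/-- The order-reversing permutation `n⋯321`, i.e. `i ↦ n+1-i` in 1-indexed notation. -/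
def revPerm (n : ℕ) : Equiv.Perm (Fin n) :=
  ⟨Fin.rev, Fin.rev, fun i => Fin.rev_rev i, fun i => Fin.rev_rev i⟩

/-- `z` is a fixed-point-free involution. -/
def IsFPF {n : ℕ} (z : Equiv.Perm (Fin n)) : Prop :=
  z * z = 1 ∧ ∀ i, z i ≠ i

/-- `x_i + x_j + β x_i x_j`. -/
def oplus {n : ℕ} (i j : Fin n) : MvPolynomial (Fin n) Rb :=
  X i + X j + C bb * (X i * X j)

/-- `IsDivDiffB i j f g` encodes `∂_i^{(β)} f = g` where `j = i+1`:
`∂_i^{(β)} f = ((1+βx_j) f - s_i((1+βx_j) f)) / (x_i - x_j)`, stated multiplicatively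
(the quotient is exact, and `g` is uniquely determined since the ring is a domain). -/
def IsDivDiffB {n : ℕ} (i j : Fin n) (f g : MvPolynomial (Fin n) Rb) : Prop :=
  (X i - X j) * g =
    (1 + C bb * X j) * f - rename ⇑(Equiv.swap i j) ((1 + C bb * X j) * f)

/-- `∏_{1 ≤ i < j ≤ n-i} (x_i + x_j + β x_i x_j)` (variables 0-indexed). -/
def spTop (n : ℕ) : MvPolynomial (Fin n) Rb :=
  ∏ p ∈ Finset.univ.filter
      (fun p : Fin n × Fin n => p.1 < p.2 ∧ (p.1 : ℕ) + (p.2 : ℕ) + 2 ≤ n),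
    oplus p.1 p.2

/-- `x_1^{n-1} x_2^{n-2} ⋯ x_{n-1}^1` (variables 0-indexed). -/
def grTop (n : ℕ) : MvPolynomial (Fin n) Rb :=
  ∏ a : Fin n, X a ^ (n - 1 - (a : ℕ))

/-- The defining property of the family of symplectic Grothendieck polynomials. -/
def IsSpFam (n : ℕ) (G : Equiv.Perm (Fin n) → MvPolynomial (Fin n) Rb) : Prop :=
  G (revPerm n) = spTop n ∧
    ∀ z : Equiv.Perm (Fin n), IsFPF z →
      ∀ i j : Fin n, (j : ℕ) = (i : ℕ) + 1 →
        z i ≠ j → z j ≠ i → z j < z i →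
          IsDivDiffB i j (G z) (G (Equiv.swap i j * z * Equiv.swap i j))

/-- The defining property of the family of Grothendieck polynomials. -/
def IsGrothFam (n : ℕ) (G : Equiv.Perm (Fin n) → MvPolynomial (Fin n) Rb) : Prop :=
  G (revPerm n) = grTop n ∧
    ∀ (w : Equiv.Perm (Fin n)) (i j : Fin n), (j : ℕ) = (i : ℕ) + 1 →
      w j < w i → IsDivDiffB i j (G w) (G (w * Equiv.swap i j))

/-- The length (number of inversions) of a permutation. -/
def invLen {n : ℕ} (w : Equiv.Perm (Fin n)) : ℕ :=
  (Finset.univ.filter (fun p : Fin n × Fin n => p.1 < p.2 ∧ w p.2 < w p.1)).card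

/-- The fixed-point-free involution length `ℓ_fpf(z) = #{(i,j) : z(i) > z(j) < i < j}`. -/
def fpfLen {n : ℕ} (z : Equiv.Perm (Fin n)) : ℕ :=
  (Finset.univ.filter
      (fun p : Fin n × Fin n => z p.2 < z p.1 ∧ z p.2 < p.1 ∧ p.1 < p.2)).card

/-- The underlying function of `Θ = (1,2)(3,4)⋯(n-1,n)`. -/
def thetaFun (n : ℕ) (hn : n % 2 = 0) (i : Fin n) : Fin n :=
  ⟨if (i : ℕ) % 2 = 0 then (i : ℕ) + 1 else (i : ℕ) - 1, by
    have hi := i.isLt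
    split_ifs with h <;> omega⟩

/-- The fixed-point-free involution `Θ = (1,2)(3,4)⋯(n-1,n)`. -/
def theta (n : ℕ) (hn : n % 2 = 0) : Equiv.Perm (Fin n) :=
  Function.Involutive.toPerm (thetaFun n hn) (by
    intro i
    have hi := i.isLt
    apply Fin.ext
    simp only [thetaFun]
    split_ifs <;> omega)

/-- One step of the partial Hecke action: `heckeStep a z = some (z · s_{a+1})` when defined,
with `a` a 0-indexed letter (so `a` corresponds to the simple transposition of `a+1, a+2`
in 1-indexed notation). -/
def heckeStep {n : ℕ} (a : ℕ) (z : Equiv.Perm (Fin n)) : Option (Equiv.Perm (Fin n)) :=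
  if h : a + 1 < n then
    let i : Fin n := ⟨a, Nat.lt_of_succ_lt h⟩
    let j : Fin n := ⟨a + 1, h⟩
    if z i < z j then some (Equiv.swap i j * z * Equiv.swap i j)
    else if z i = j ∧ z j = i then none
    else if z i ≠ j ∧ z j ≠ i ∧ z j < z i then some z
    else none
  else none

/-- Apply a word of (0-indexed) letters to `z` via the partial Hecke action. -/
def heckeApply {n : ℕ} (l : List ℕ) (z : Equiv.Perm (Fin n)) :
    Option (Equiv.Perm (Fin n)) :=
  l.foldl (fun o a => o.bind (heckeStep a)) (some z)

/-- The simple transposition corresponding to the 0-indexed letter `a`. -/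
def swapAt (n : ℕ) (a : ℕ) : Equiv.Perm (Fin n) :=
  if h : a + 1 < n then Equiv.swap ⟨a, Nat.lt_of_succ_lt h⟩ ⟨a + 1, h⟩ else 1

/-- The permutation `s_{i_1} s_{i_2} ⋯ s_{i_l}` of a word. -/
def wordToPerm (n : ℕ) (l : List ℕ) : Equiv.Perm (Fin n) := (l.map (swapAt n)).prod

/-- `l` is a reduced word for `w`. -/
def IsReducedWord (n : ℕ) (w : Equiv.Perm (Fin n)) (l : List ℕ) : Prop :=
  (∀ a ∈ l, a + 1 < n) ∧ wordToPerm n l = w ∧ l.length = invLen w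

/-- The set of Hecke atoms `B_fpf(z)`. -/
def Bfpf (n : ℕ) (hn : n % 2 = 0) (z : Equiv.Perm (Fin n)) :
    Finset (Equiv.Perm (Fin n)) :=
  @Finset.filter _
    (fun w => ∃ l : List ℕ, IsReducedWord n w l ∧ heckeApply l (theta n hn) = some z)
    (Classical.decPred _) Finset.univ

/-- `extPerm z w` is the permutation `z × w` acting on the first `m` letters by `z`
and the last `n` letters by `w`. -/
def extPerm {m n : ℕ} (z : Equiv.Perm (Fin m)) (w : Equiv.Perm (Fin n)) :
    Equiv.Perm (Fin (m + n)) :=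
  finSumFinEquiv.symm.trans ((Equiv.sumCongr z w).trans finSumFinEquiv)

/-- `rank(z_{[i][j]}) = #{k ∈ [j] : z(k) ≤ i}` (1-indexed sizes `i, j`). -/
def permRank {n : ℕ} (z : Equiv.Perm (Fin n)) (i j : ℕ) : ℕ :=
  (Finset.univ.filter (fun k : Fin n => (k : ℕ) < j ∧ ((z k : Fin n) : ℕ) < i)).card

/-- The rank of the upper-left `i × j` corner of `A` (1-indexed sizes `i, j ≤ n`). -/
def cornerRank {n : ℕ} (A : Matrix (Fin n) (Fin n) ℂ) (i j : ℕ) : ℕ :=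
  Matrix.rank (Matrix.of fun (a : Fin (min i n)) (b : Fin (min j n)) =>
    A ⟨(a : ℕ), lt_of_lt_of_le a.isLt (min_le_right i n)⟩
      ⟨(b : ℕ), lt_of_lt_of_le b.isLt (min_le_right j n)⟩)

/-- The orthogonal Rothe diagram `D^O(z) = {(i, z(j)) : z(i) > z(j) ≤ i < j}` (0-indexed). -/
def DO (n : ℕ) (z : Equiv.Perm (Fin n)) : Finset (Fin n × Fin n) :=
  Finset.image (fun p : Fin n × Fin n => (p.1, z p.2))
    (Finset.univ.filter (fun p : Fin n × Fin n => z p.2 < z p.1 ∧ z p.2 ≤ p.1 ∧ p.1 < p.2))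

/-- The symplectic Rothe diagram `D^Sp(z) = {(i, z(j)) : z(i) > z(j) < i < j}` (0-indexed). -/
def DSp (n : ℕ) (z : Equiv.Perm (Fin n)) : Finset (Fin n × Fin n) :=
  Finset.image (fun p : Fin n × Fin n => (p.1, z p.2))
    (Finset.univ.filter (fun p : Fin n × Fin n => z p.2 < z p.1 ∧ z p.2 < p.1 ∧ p.1 < p.2))

/-- The essential set `Ess(D) = {(i,j) ∈ D : (i,j+1) ∉ D and (i+1,j) ∉ D}`. -/
def Ess {n : ℕ} (D : Finset (Fin n × Fin n)) : Finset (Fin n × Fin n) :=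
  D.filter (fun p =>
    (∀ q ∈ D, ¬(q.1 = p.1 ∧ (q.2 : ℕ) = (p.2 : ℕ) + 1)) ∧
    (∀ q ∈ D, ¬((q.1 : ℕ) = (p.1 : ℕ) + 1 ∧ q.2 = p.2)))

/-- A permutation is vexillary if it avoids the pattern 2143. -/
def Vexillary {n : ℕ} (z : Equiv.Perm (Fin n)) : Prop :=
  ¬ ∃ i j k l : Fin n, i < j ∧ j < k ∧ k < l ∧ z j < z i ∧ z i < z l ∧ z l < z k

/-- The ideal of `ℤ[x_1,…,x_N]` generated by symmetric polynomials with zero constant term. -/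
def ILambda (N : ℕ) : Ideal (MvPolynomial (Fin N) ℤ) :=
  Ideal.span {f : MvPolynomial (Fin N) ℤ |
    (∀ σ : Equiv.Perm (Fin N), rename (⇑σ) f = f) ∧ coeff 0 f = 0}

/-- Substitute `x_j = 0` for all `j > n`, producing a polynomial in `x_1,…,x_n`. -/
def truncVars (n N : ℕ) (f : MvPolynomial (Fin N) Rb) : MvPolynomial (Fin n) Rb :=
  aeval (fun i : Fin N => if h : (i : ℕ) < n then X ⟨(i : ℕ), h⟩ else 0) f

/-- The order used to list the elements of a pipe-dream subset `S`:
rows weakly increasing, columns strictly decreasing within a row. -/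
def rowOrder {n : ℕ} (p q : Fin n × Fin n) : Prop :=
  p.1 < q.1 ∨ (p.1 = q.1 ∧ q.2 < p.2)

/-- `δ(S)` is a symplectic Hecke word for `z` (with Hecke words computed from `Θ`);
here `L` is the listing of `S` in the order `rowOrder`, and `(a,b) ∈ S` (0-indexed)
contributes the 0-indexed letter `a + b`, i.e. the 1-indexed letter `(b+1)+(a+1)-1`. -/
def DeltaHeckeWord (n : ℕ) (hn : n % 2 = 0) (z : Equiv.Perm (Fin n))
    (S : Finset (Fin n × Fin n)) : Prop :=
  ∃ L : List (Fin n × Fin n), L.toFinset = S ∧ L.Chain' rowOrder ∧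
    heckeApply (L.map (fun p => (p.1 : ℕ) + (p.2 : ℕ))) (theta n hn) = some z



/-! Downward induction on the size of the diagram. A dominant diagram is a shape whose column
`b` occupies the rows `b + 1, …, b + ν b` for a strict partition `ν`; pigeonholing the values of
`z` shows that every column stops above the antidiagonal (`2 b + ν b + 2 ≤ n`). If every column
reaches it, the shape is the staircase, `z = n⋯21`, and the formula is the initial condition.
Otherwise let `c` be the first column that stops short and `r = c + ν c + 1`: then `z c = r`, and
`z' = s_r z s_r` is dominant with the box `(r, c)` added. The product over `D^Sp(z)` is symmetric
in `x_r, x_{r+1}`, so applying `∂_r^{(β)}` to `𝔊^Sp_{z'} = (x_r + x_c + β x_r x_c) · ∏_{D^Sp(z)}`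
leaves exactly `∏_{D^Sp(z)}`. -/

open Equiv Function Finset

variable {n : ℕ}

lemma IsFPF.involutive {z : Perm (Fin n)} (hz : IsFPF z) : Involutive z :=
  fun x => congrArg (· x) hz.1

lemma IsFPF.swap_conj {z : Perm (Fin n)} (hz : IsFPF z) (a b : Fin n) :
    IsFPF (swap a b * z * swap a b) := by
  refine ⟨?_, fun x hx => hz.2 (swap a b x) ?_⟩
  · simp only [mul_assoc, swap_mul_self_mul]
    rw [← mul_assoc z, hz.1, one_mul, swap_mul_self]
  · simpa [Perm.mul_apply, swap_apply_eq_iff] using hx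

-- Stated with `r = x`, `r' = x` so that `rcases … rfl` substitutes `x` and keeps `r`, `r'`.
lemma val_swap_cases {r r' : Fin n} (x : Fin n) :
    ((swap r r' x : ℕ) = r' ∧ r = x) ∨ ((swap r r' x : ℕ) = r ∧ r' = x) ∨
      ((swap r r' x : ℕ) = x ∧ (x : ℕ) ≠ r ∧ (x : ℕ) ≠ r') := by
  rcases eq_or_ne x r with rfl | h1
  · simp
  rcases eq_or_ne x r' with rfl | h2
  · simp
  simp [swap_apply_of_ne_of_ne h1 h2, Fin.val_ne_of_ne h1, Fin.val_ne_of_ne h2]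

lemma apply_eq_rev_of_forall_rev_le {f : Fin n → Fin n} (hf : Injective f) {c : ℕ}
    (h : ∀ b : Fin n, (b : ℕ) < c → b.rev ≤ f b) (b : Fin n) (hb : (b : ℕ) < c) :
    f b = b.rev := by
  induction b using WellFoundedLT.induction with
  | _ b ih =>
  by_contra hne
  have ha : (f b).rev < b := by
    simpa using Fin.rev_lt_rev.mpr (lt_of_le_of_ne (h b hb) (Ne.symm hne))
  have hfa := ih _ ha (by omega)
  rw [Fin.rev_rev] at hfa
  exact ha.ne (hf hfa)

lemma eq_revPerm_of_apply_eq_rev (hev : n % 2 = 0) {z : Perm (Fin n)} (hz : IsFPF z)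
    (h : ∀ b : Fin n, 2 * (b : ℕ) + 2 < n → z b = b.rev) : z = revPerm n := by
  have hinv := hz.involutive
  have houter : ∀ a : Fin n, 2 * (a : ℕ) + 2 < n ∨ 2 * (a.rev : ℕ) + 2 < n → z a = a.rev := by
    rintro a (ha | ha)
    · exact h a ha
    · have ha' := h a.rev ha
      rw [Fin.rev_rev] at ha'
      exact (congrArg z ha').symm.trans (hinv _)
  ext x
  by_cases hx : 2 * (x : ℕ) + 2 < n ∨ 2 * (x.rev : ℕ) + 2 < n
  · exact congrArg Fin.val (houter x hx)
  -- the two middle points are exchanged because `z` has no fixed point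
  have hzx : ¬ (2 * (z x : ℕ) + 2 < n ∨ 2 * ((z x).rev : ℕ) + 2 < n) := fun hy => by
    have := congrArg Fin.val (houter _ hy)
    rw [hinv, Fin.val_rev] at this
    simp only [Fin.val_rev] at hx hy
    omega
  have := Fin.val_ne_of_ne (hz.2 x)
  simp only [Fin.val_rev] at hx hzx ⊢
  change (z x : ℕ) = n - (x + 1)
  omega

lemma mem_DSp_iff {z : Perm (Fin n)} (hz : Involutive z) {i b : Fin n} :
    (i, b) ∈ DSp n z ↔ b < i ∧ i < z b ∧ b < z i := by
  simp only [DSp, mem_image, mem_filter, mem_univ, true_and, Prod.exists, Prod.mk.injEq]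
  constructor
  · rintro ⟨a, j, ⟨h1, h2, h3⟩, rfl, rfl⟩
    exact ⟨h2, by rwa [hz], h1⟩
  · rintro ⟨h1, h2, h3⟩
    exact ⟨i, z b, ⟨by rwa [hz], by rwa [hz], h2⟩, rfl, hz b⟩

lemma mk_apply_notMem_DSp {z : Perm (Fin n)} (hz : Involutive z) (r : Fin n) :
    (r, z r) ∉ DSp n z := by
  rw [mem_DSp_iff hz, hz]
  exact fun h => lt_irrefl r h.2.1

/- `s = (r r+1)` is order preserving except on the pair `{r, r+1}`, so only comparisons with
`r, r+1, z r, z (r+1)` can change; the case split below runs through all of them. -/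
lemma mem_DSp_swap_conj_iff {z : Perm (Fin n)} (hz : IsFPF z) {r r' : Fin n}
    (hr : (r' : ℕ) = r + 1) (hzr : z r < r) (hlt : z r < z r') (p : Fin n × Fin n) :
    p ∈ DSp n (swap r r' * z * swap r r') ↔
      p = (r, z r) ∨ Prod.map (swap r r') (swap r r') p ∈ DSp n z := by
  obtain ⟨i, b⟩ := p
  obtain ⟨a, rfl⟩ := (swap r r').surjective i
  obtain ⟨d, rfl⟩ := (swap r r').surjective b
  have hinv := hz.involutive
  have hfix := hz.2 r'
  have ha := hinv.eq_iff (x := a) (y := r)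
  have hd := hinv.eq_iff (x := d) (y := r)
  have ha' := hinv.eq_iff (x := a) (y := r')
  have hd' := hinv.eq_iff (x := d) (y := r')
  simp only [Prod.map, mem_DSp_iff hinv, mem_DSp_iff (hz.swap_conj r r').involutive,
    Perm.mul_apply, swap_apply_self, Prod.mk.injEq]
  simp only [Fin.lt_def, Fin.ext_iff, ne_eq] at hzr hlt hfix ha hd ha' hd' ⊢
  rcases val_swap_cases (r := r) (r' := r') (z a) with h3 | h3 | h3 <;>
  rcases val_swap_cases (r := r) (r' := r') (z d) with h4 | h4 | h4 <;>
  rcases val_swap_cases (r := r) (r' := r') a with ⟨h1, rfl⟩ | ⟨h1, rfl⟩ | h1 <;>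
  rcases val_swap_cases (r := r) (r' := r') d with ⟨h2, rfl⟩ | ⟨h2, rfl⟩ | h2 <;>
  omega

lemma DSp_swap_conj {z : Perm (Fin n)} (hz : IsFPF z) {r r' : Fin n}
    (hr : (r' : ℕ) = r + 1) (hzr : z r < r) (hlt : z r < z r')
    (hstable : ∀ p, Prod.map (swap r r') (swap r r') p ∈ DSp n z ↔ p ∈ DSp n z) :
    DSp n (swap r r' * z * swap r r') = insert (r, z r) (DSp n z) := by
  ext p
  rw [mem_DSp_swap_conj_iff hz hr hzr hlt, hstable, mem_insert]

lemma oplus_comm (i j : Fin n) : oplus i j = oplus j i := by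
  unfold oplus; ring

lemma rename_oplus (σ : Perm (Fin n)) (i j : Fin n) :
    rename σ (oplus i j) = oplus (σ i) (σ j) := by
  simp [oplus]

lemma rename_prod_oplus_of_forall_mem_iff (σ : Perm (Fin n)) {S : Finset (Fin n × Fin n)}
    (hS : ∀ p, Prod.map σ σ p ∈ S ↔ p ∈ S) :
    rename σ (∏ p ∈ S, oplus p.1 p.2) = ∏ p ∈ S, oplus p.1 p.2 := by
  rw [map_prod]
  exact prod_equiv (σ.prodCongr σ) (fun p => (hS p).symm) fun p _ => rename_oplus σ p.1 p.2

lemma spTop_eq_prod {S : Finset (Fin n × Fin n)}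
    (hS : ∀ p, p ∈ S ↔ p.2 < p.1 ∧ (p.1 : ℕ) + p.2 + 2 ≤ n) :
    spTop n = ∏ p ∈ S, oplus p.1 p.2 := by
  refine prod_equiv (Equiv.prodComm _ _) (fun p => ?_) fun p _ => oplus_comm p.1 p.2
  simp only [mem_filter, mem_univ, true_and, hS, Equiv.prodComm_apply, Prod.fst_swap,
    Prod.snd_swap]
  omega

lemma IsDivDiffB.unique {i j : Fin n} (hij : i ≠ j) {f g g' : MvPolynomial (Fin n) Rb}
    (h : IsDivDiffB i j f g) (h' : IsDivDiffB i j f g') : g = g' :=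
  mul_left_cancel₀ (sub_ne_zero.mpr (X_injective.ne hij)) (h.trans h'.symm)

lemma isDivDiffB_oplus_mul {i j c : Fin n} (hci : c ≠ i) (hcj : c ≠ j)
    {h : MvPolynomial (Fin n) Rb} (hh : rename (swap i j) h = h) :
    IsDivDiffB i j (oplus i c * h) h := by
  have e : rename (swap i j) ((1 + C bb * X j) * (oplus i c * h))
      = (1 + C bb * X i) * (oplus j c * h) := by
    simp [rename_oplus, hh, swap_apply_of_ne_of_ne hci hcj]
  rw [IsDivDiffB, e]
  unfold oplus
  ring

lemma IsSpFam.eq_prod_of_swap_conj {G : Perm (Fin n) → MvPolynomial (Fin n) Rb}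
    (hG : IsSpFam n G) {z : Perm (Fin n)} (hz : IsFPF z) {r r' : Fin n}
    (hr : (r' : ℕ) = r + 1) (hzr : z r < r) (hlt : z r < z r')
    (hstable : ∀ p, Prod.map (swap r r') (swap r r') p ∈ DSp n z ↔ p ∈ DSp n z)
    (hconj : G (swap r r' * z * swap r r') =
      ∏ p ∈ DSp n (swap r r' * z * swap r r'), oplus p.1 p.2) :
    G z = ∏ p ∈ DSp n z, oplus p.1 p.2 := by
  have hinv := hz.involutive
  have hrr' : r ≠ r' := fun h => by simp [h] at hr
  have hzr_ne : z r ≠ r := hzr.ne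
  have hzr_ne' : z r ≠ r' := fun h => by rw [Fin.lt_def, h] at hzr; omega
  have hzr'_ne : z r' ≠ r := fun h => hzr_ne' (by rw [← h, hinv])
  have hstep := hG.2 _ (hz.swap_conj r r') r r' hr
    (by simpa [swap_apply_of_ne_of_ne hzr'_ne (hz.2 r')] using (hz.2 r'))
    (by simpa [swap_apply_of_ne_of_ne hzr_ne hzr_ne'] using hzr_ne)
    (by simpa [swap_apply_of_ne_of_ne hzr_ne hzr_ne', swap_apply_of_ne_of_ne hzr'_ne (hz.2 r')])
  rw [show swap r r' * (swap r r' * z * swap r r') * swap r r' = z by simp [mul_assoc], hconj,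
    DSp_swap_conj hz hr hzr hlt hstable, prod_insert (mk_apply_notMem_DSp hinv r)] at hstep
  exact hstep.unique hrr' (isDivDiffB_oplus_mul hzr_ne hzr_ne'
    (rename_prod_oplus_of_forall_mem_iff _ hstable))

/-- The diagram `{(i + j, j) : 1 ≤ i ≤ ν j}` of the statement, with 0-based indices. -/
def shape (n : ℕ) (ν : ℕ → ℕ) : Finset (Fin n × Fin n) :=
  univ.filter fun p => p.2 < p.1 ∧ (p.1 : ℕ) ≤ p.2 + ν p.2

lemma mem_shape {ν : ℕ → ℕ} {i b : Fin n} : (i, b) ∈ shape n ν ↔ b < i ∧ (i : ℕ) ≤ b + ν b := by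
  simp [shape]

lemma shape_update_succ {ν : ℕ → ℕ} {r c : Fin n} (hr : (r : ℕ) = c + ν c + 1) :
    shape n (update ν c (ν c + 1)) = insert (r, c) (shape n ν) := by
  ext ⟨i, b⟩
  simp only [mem_insert, mem_shape, Prod.mk.injEq, Fin.lt_def, Fin.ext_iff]
  rcases eq_or_ne (b : ℕ) c with h | h
  · simp only [h, update_self, and_true]
    omega
  · simp only [update_of_ne h]
    omega

/-- When columns `r`, `r + 1` are empty and no column ends in row `r`, rows `r` and `r + 1`
agree. -/
lemma map_swap_mem_shape_iff {ν : ℕ → ℕ} {r r' : Fin n} (hr : (r' : ℕ) = r + 1)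
    (hνr : ν r = 0) (hνr' : ν r' = 0) (hend : ∀ b, ν b ≠ 0 → b + ν b ≠ r) (p : Fin n × Fin n) :
    Prod.map (swap r r') (swap r r') p ∈ shape n ν ↔ p ∈ shape n ν := by
  obtain ⟨i, b⟩ := p
  have hcol : ν (swap r r' b) = ν b := by
    rcases val_swap_cases (r := r) (r' := r') b with ⟨h, rfl⟩ | ⟨h, rfl⟩ | ⟨h, -⟩ <;>
      simp only [h, hνr, hνr']
  simp only [Prod.map, mem_shape, Fin.lt_def, hcol]
  have := hend b
  rcases val_swap_cases (r := r) (r' := r') i with ⟨h1, rfl⟩ | ⟨h1, rfl⟩ | h1 <;>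
  rcases val_swap_cases (r := r) (r' := r') b with ⟨h2, rfl⟩ | ⟨h2, rfl⟩ | h2 <;>
  omega

def IsStrictPartition (ν : ℕ → ℕ) : Prop := ∀ b, ν (b + 1) ≠ 0 → ν (b + 1) < ν b

lemma isStrictPartition_of_strictAnti {k : ℕ} {μ : Fin k → ℕ} (hμ : StrictAnti μ) :
    IsStrictPartition fun b => if h : b < k then μ ⟨b, h⟩ else 0 := by
  intro b hb
  have hb' : b + 1 < k := by by_contra h; simp [h] at hb
  simpa [hb', show b < k by omega] using hμ (show (⟨b, by omega⟩ : Fin k) < ⟨b + 1, hb'⟩ by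
    simp [Fin.lt_def])

lemma IsStrictPartition.add_le_add_of_le {ν : ℕ → ℕ} (hν : IsStrictPartition ν) {a b : ℕ}
    (hab : a ≤ b) (hb : ν b ≠ 0) : b + ν b ≤ a + ν a := by
  induction b, hab using Nat.le_induction with
  | base => rfl
  | succ b _ ih =>
    have := hν b hb
    have := ih (by omega)
    omega

lemma IsStrictPartition.eq_zero_of_add_lt {ν : ℕ → ℕ} (hν : IsStrictPartition ν) {a b : ℕ}
    (hab : a + ν a < b) : ν b = 0 := by
  by_contra h
  have := hν.add_le_add_of_le (a := a) (by omega) h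
  omega

lemma IsStrictPartition.update_succ {ν : ℕ → ℕ} (hν : IsStrictPartition ν) {c : ℕ}
    (hc : ∀ b, b + 1 = c → ν c + 1 < ν b) : IsStrictPartition (update ν c (ν c + 1)) := by
  intro b hb
  rcases eq_or_ne (b + 1) c with rfl | h1
  · simpa using hc b rfl
  rcases eq_or_ne b c with rfl | h2
  · simp only [update_self, update_of_ne h1] at hb ⊢
    have := hν b hb
    omega
  · simp only [update_of_ne h1, update_of_ne h2] at hb ⊢
    exact hν b hb

structure IsSpDominant (n : ℕ) (z : Perm (Fin n)) (ν : ℕ → ℕ) : Prop where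
  fpf : IsFPF z
  strict : IsStrictPartition ν
  DSp_eq : DSp n z = shape n ν

namespace IsSpDominant

variable {z : Perm (Fin n)} {ν : ℕ → ℕ}

lemma mem_shape_iff (hd : IsSpDominant n z ν) {i b : Fin n} :
    (i, b) ∈ shape n ν ↔ b < i ∧ i < z b ∧ b < z i :=
  hd.DSp_eq ▸ mem_DSp_iff hd.fpf.involutive

lemma add_add_two_le (hd : IsSpDominant n z ν) (hn : 2 ≤ n) {b : ℕ} (hb : ν b ≠ 0) :
    b + ν b + 2 ≤ n := by
  have h0 := hd.strict.add_le_add_of_le (Nat.zero_le b) hb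
  by_contra hlt
  have hlast := (hd.mem_shape_iff (i := ⟨n - 1, by omega⟩) (b := ⟨0, by omega⟩)).mp
    (mem_shape.mpr ⟨by simp [Fin.lt_def]; omega, by simp; omega⟩)
  have := (z ⟨0, by omega⟩).isLt
  simp only [Fin.lt_def] at hlast
  omega

/-- Pigeonhole: `z` maps the columns `0, …, b` injectively into the rows below `b + ν b`. -/
lemma two_mul_add_add_two_le (hd : IsSpDominant n z ν) (hn : 2 ≤ n) {b : ℕ} (hb : ν b ≠ 0) :
    2 * b + ν b + 2 ≤ n := by
  have hbn := hd.add_add_two_le hn hb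
  have hmaps : Set.MapsTo z ↑(Iic (⟨b, by omega⟩ : Fin n))
      ↑(Ioi (⟨b + ν b, by omega⟩ : Fin n)) := by
    intro a ha
    simp only [coe_Iic, coe_Ioi, Set.mem_Iic, Set.mem_Ioi, Fin.le_def, Fin.lt_def] at ha ⊢
    have hend := hd.strict.add_le_add_of_le ha hb
    have hcol := hd.add_add_two_le hn (show ν a ≠ 0 by omega)
    have := (hd.mem_shape_iff (i := ⟨a + ν a, by omega⟩) (b := a)).mp
      (mem_shape.mpr ⟨by simp [Fin.lt_def]; omega, le_rfl⟩)
    simp only [Fin.lt_def] at this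
    omega
  have := card_le_card_of_injOn z hmaps z.injective.injOn
  simp only [Fin.card_Iic, Fin.card_Ioi] at this
  omega

lemma two_mul_add_add_two_eq (hd : IsSpDominant n z ν) {b : ℕ} (hb : 2 * b + 2 < n)
    (hfull : n ≤ 2 * b + ν b + 2) : 2 * b + ν b + 2 = n :=
  le_antisymm (hd.two_mul_add_add_two_le (by omega) (by omega)) hfull

/-- Columns that reach the antidiagonal force `z` to reverse them. -/
lemma apply_eq_rev_of_lt (hd : IsSpDominant n z ν) {c : ℕ} (hc : 2 * c < n)
    (hfull : ∀ b < c, n ≤ 2 * b + ν b + 2) (b : Fin n) (hb : (b : ℕ) < c) : z b = b.rev := by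
  refine apply_eq_rev_of_forall_rev_le z.injective (fun a ha => ?_) b hb
  have heq := hd.two_mul_add_add_two_eq (by omega) (hfull a ha)
  have := (hd.mem_shape_iff (i := ⟨n - 2 - a, by omega⟩) (b := a)).mp
    (mem_shape.mpr ⟨by simp [Fin.lt_def]; omega, by simp; omega⟩)
  simp only [Fin.lt_def, Fin.le_def, Fin.val_rev] at this ⊢
  omega

lemma le_apply_of_add_lt (hd : IsSpDominant n z ν) {c : ℕ} (hc : 2 * c < n)
    (hfull : ∀ b < c, n ≤ 2 * b + ν b + 2) {y : Fin n} (hy : (y : ℕ) + c < n) : c ≤ z y := by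
  by_contra! h
  have := congrArg Fin.val (hd.apply_eq_rev_of_lt hc hfull (z y) h)
  rw [hd.fpf.involutive, Fin.val_rev] at this
  omega

lemma apply_eq_add_add_one (hd : IsSpDominant n z ν) {C r : Fin n}
    (hc : 2 * (C : ℕ) + ν C + 2 < n) (hfull : ∀ b < (C : ℕ), n ≤ 2 * b + ν b + 2)
    (hr : (r : ℕ) = C + ν C + 1) : z C = r := by
  have hinv := hd.fpf.involutive
  have hlow : ∀ {y : Fin n}, (y : ℕ) + C < n → C ≤ z y := fun hy =>
    hd.le_apply_of_add_lt (by omega) hfull hy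
  refine le_antisymm ?_ ?_
  · by_contra! hlt
    have h1 : C ≤ z r := hlow (by omega)
    have h2 : (z r : ℕ) ≠ C := fun h =>
      hlt.ne' (by rw [show C = z r from Fin.ext h.symm, hinv])
    have := mem_shape.mp (hd.mem_shape_iff.mpr
      ⟨by rw [Fin.lt_def]; omega, hlt, by rw [Fin.lt_def]; omega⟩)
    omega
  · rcases Nat.eq_zero_or_pos (ν C) with h0 | hpos
    · have h1 : C ≤ z C := hlow (by omega)
      have h2 := Fin.val_ne_of_ne (hd.fpf.2 C)
      rw [Fin.le_def]
      omega
    · have := (hd.mem_shape_iff (i := ⟨C + ν C, by omega⟩) (b := C)).mp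
        (mem_shape.mpr ⟨by simp [Fin.lt_def]; omega, by simp⟩)
      simp only [Fin.lt_def, Fin.le_def] at this ⊢
      omega

/-- At the first column `c` that stops short of the antidiagonal, conjugating by
`s = (r r+1)` with `r = c + ν c + 1` adds exactly the box `(r, c)`. -/
lemma exists_swap_step (hd : IsSpDominant n z ν) {c : ℕ} (hc : 2 * c + ν c + 2 < n)
    (hfull : ∀ b < c, n ≤ 2 * b + ν b + 2) :
    ∃ r r' : Fin n, (r' : ℕ) = r + 1 ∧ z r < r ∧ z r < z r' ∧
      (∀ p, Prod.map (swap r r') (swap r r') p ∈ shape n ν ↔ p ∈ shape n ν) ∧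
      IsSpDominant n (swap r r' * z * swap r r') (update ν c (ν c + 1)) := by
  obtain ⟨C, rfl⟩ : ∃ C : Fin n, (C : ℕ) = c := ⟨⟨c, by omega⟩, rfl⟩
  obtain ⟨r, hr⟩ : ∃ r : Fin n, (r : ℕ) = C + ν C + 1 := ⟨⟨_, by omega⟩, rfl⟩
  obtain ⟨r', hr'⟩ : ∃ r' : Fin n, (r' : ℕ) = r + 1 := ⟨⟨r + 1, by omega⟩, rfl⟩
  have hzC := hd.apply_eq_add_add_one hc hfull hr
  have hzr : z r = C := by rw [← hzC, hd.fpf.involutive]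
  have hCr : z r < r := by rw [hzr, Fin.lt_def]; omega
  have hCr' : z r < z r' := by
    have h1 := hd.le_apply_of_add_lt (y := r') (by omega) hfull (by omega)
    have h2 : z r' ≠ C := fun h => by
      have := congrArg Fin.val (hzC ▸ h ▸ hd.fpf.involutive r')
      omega
    rw [hzr, Fin.lt_def]
    have := Fin.val_ne_of_ne h2
    omega
  have hend : ∀ b, ν b ≠ 0 → b + ν b ≠ r := fun b hb => by
    rcases lt_or_ge b C with hbc | hbc
    · have := hd.two_mul_add_add_two_eq (by omega) (hfull b hbc)
      omega
    · have := hd.strict.add_le_add_of_le hbc hb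
      omega
  have hstable := map_swap_mem_shape_iff hr' (hd.strict.eq_zero_of_add_lt (a := C) (by omega))
    (hd.strict.eq_zero_of_add_lt (a := C) (by omega)) hend
  refine ⟨r, r', hr', hCr, hCr', hstable, hd.fpf.swap_conj r r',
    hd.strict.update_succ fun b hb => ?_, ?_⟩
  · have := hd.two_mul_add_add_two_eq (by omega) (hfull b (by omega))
    omega
  · rw [DSp_swap_conj hd.fpf hr' hCr hCr' (hd.DSp_eq ▸ hstable), hzr, hd.DSp_eq,
      shape_update_succ hr]

lemma eq_revPerm (hd : IsSpDominant n z ν) (hev : n % 2 = 0)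
    (hfull : ∀ b, n ≤ 2 * b + ν b + 2) : z = revPerm n :=
  eq_revPerm_of_apply_eq_rev hev hd.fpf fun b hb =>
    hd.apply_eq_rev_of_lt (c := b + 1) (by omega) (fun a _ => hfull a) b (by omega)

lemma mem_DSp_iff_of_full (hd : IsSpDominant n z ν) (hev : n % 2 = 0)
    (hfull : ∀ b, n ≤ 2 * b + ν b + 2) (p : Fin n × Fin n) :
    p ∈ DSp n z ↔ p.2 < p.1 ∧ (p.1 : ℕ) + p.2 + 2 ≤ n := by
  obtain ⟨i, b⟩ := p
  have hb := hfull b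
  rw [hd.DSp_eq, mem_shape, Fin.lt_def]
  dsimp only
  by_cases h0 : ν b = 0
  · omega
  · have := hd.two_mul_add_add_two_le (by omega) h0
    omega

end IsSpDominant

theorem IsSpFam.eq_prod_DSp_of_isSpDominant {G : Perm (Fin n) → MvPolynomial (Fin n) Rb}
    (hG : IsSpFam n G) (hev : n % 2 = 0) {z : Perm (Fin n)} {ν : ℕ → ℕ}
    (hd : IsSpDominant n z ν) : G z = ∏ p ∈ DSp n z, oplus p.1 p.2 := by
  induction hk : n * n - (DSp n z).card using Nat.strong_induction_on generalizing z ν with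
  | _ k ih =>
  by_cases hex : ∃ c, 2 * c + ν c + 2 < n
  · obtain ⟨c, hc, hfull⟩ : ∃ c, 2 * c + ν c + 2 < n ∧ ∀ b < c, n ≤ 2 * b + ν b + 2 :=
      ⟨Nat.find hex, Nat.find_spec hex, fun b hb => not_lt.mp (Nat.find_min hex hb)⟩
    obtain ⟨r, r', hr, hzr, hlt, hstable, hd'⟩ := hd.exists_swap_step hc hfull
    rw [← hd.DSp_eq] at hstable
    have hcard : (DSp n (swap r r' * z * swap r r')).card = (DSp n z).card + 1 := by
      rw [DSp_swap_conj hd.fpf hr hzr hlt hstable,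
        card_insert_of_notMem (mk_apply_notMem_DSp hd.fpf.involutive r)]
    have hle := card_le_univ (DSp n (swap r r' * z * swap r r'))
    simp only [Fintype.card_prod, Fintype.card_fin] at hle
    exact hG.eq_prod_of_swap_conj hd.fpf hr hzr hlt hstable (ih _ (by omega) hd' rfl)
  · simp only [not_exists, not_lt] at hex
    rw [hd.eq_revPerm hev hex, hG.1]
    exact spTop_eq_prod (hd.eq_revPerm hev hex ▸ hd.mem_DSp_iff_of_full hev hex)

theorem statement5_general (n : ℕ) (hev : n % 2 = 0)
    (G : Equiv.Perm (Fin n) → MvPolynomial (Fin n) Rb) (hG : IsSpFam n G)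
    (z : Equiv.Perm (Fin n)) (hz : IsFPF z)
    (k : ℕ) (μ : Fin k → ℕ) (hanti : StrictAnti μ)
    (hdom : ∀ p : Fin n × Fin n, p ∈ DSp n z ↔
      ∃ h : (p.2 : ℕ) < k,
        (p.2 : ℕ) + 1 ≤ (p.1 : ℕ) ∧ (p.1 : ℕ) ≤ (p.2 : ℕ) + μ ⟨(p.2 : ℕ), h⟩) :
    G z = ∏ p ∈ DSp n z, oplus p.1 p.2 := by
  refine hG.eq_prod_DSp_of_isSpDominant hev ⟨hz, isStrictPartition_of_strictAnti hanti, ?_⟩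
  ext ⟨i, b⟩
  rw [hdom, mem_shape, Fin.lt_def]
  by_cases hb : (b : ℕ) < k <;> simp [hb]

theorem statement5 (n : ℕ) (hpos : 0 < n) (hev : n % 2 = 0)
    (G : Equiv.Perm (Fin n) → MvPolynomial (Fin n) Rb) (hG : IsSpFam n G)
    (z : Equiv.Perm (Fin n)) (hz : IsFPF z)
    (k : ℕ) (μ : Fin k → ℕ) (hanti : StrictAnti μ) (hposμ : ∀ j, 0 < μ j)
    (hdom : ∀ p : Fin n × Fin n, p ∈ DSp n z ↔
      ∃ h : (p.2 : ℕ) < k,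
        (p.2 : ℕ) + 1 ≤ (p.1 : ℕ) ∧ (p.1 : ℕ) ≤ (p.2 : ℕ) + μ ⟨(p.2 : ℕ), h⟩) :
    G z = ∏ p ∈ DSp n z, oplus p.1 p.2 :=
  statement5_general n hev G hG z hz k μ hanti hdom

end
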